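/- arXiv:2205.11586 — 2 statements merged into one kernel-verified Lean document; each statement's English description precedes it below -/
import Mathlib

section
/- Let x = (x_n), y = (y_n) ∈ c₀. Then x ⊥_B y if and only if 0 lies in the convex hull of { conj(x_n) y_n : |x_n| = ‖x‖ }. -/
open ENNReal Filter

/-- The space `c₀` of sequences converging to `0`, as a subspace of `ℓ∞`. -/
def czero (𝕂 : Type*) [RCLike 𝕂] : Submodule 𝕂 (lp (fun _ : ℕ => 𝕂) ∞) where
  carrier := {x | Tendsto (fun n => x n) atTop (nhds 0)}
  zero_mem' := by
    simpa [lp.coeFn_zero] using (tendsto_const_nhds : Tendsto (fun _ : ℕ => (0 : 𝕂)) atTop _)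
  add_mem' := by
    intro a b ha hb
    have h := (Set.mem_setOf_eq ▸ ha).add (Set.mem_setOf_eq ▸ hb)
    simpa [lp.coeFn_add, Set.mem_setOf_eq] using h
  smul_mem' := by
    intro c a ha
    have h := (Set.mem_setOf_eq ▸ ha).const_mul c
    simpa [lp.coeFn_smul, Set.mem_setOf_eq, smul_eq_mul] using h

/-!
If `0` is a convex combination of the points `conj(xₙ) yₙ` over peak coordinates (`|xₙ| = ‖x‖`),
then for every `λ` the functional `z ↦ Re(λ z)` is nonnegative at one of them, and at that
coordinate `|xₙ + λ yₙ| ≥ |xₙ|` by expanding the square. Conversely, `x ∈ c₀` has finitely many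
peak coordinates and `c := sup {|xₙ| : |xₙ| < ‖x‖} < ‖x‖`, so if `0` is outside the (compact)
convex hull it is strictly separated from it by some `z ↦ Re(μ z)`, with margin `δ`. For small
`t > 0`, the peak coordinates of `x - tμ y` have modulus at most `√(‖x‖² - tδ)` and the others at
most `c + t‖μ‖‖y‖`, so `‖x - tμ y‖ < ‖x‖`.
-/

open RCLike ComplexConjugate Topology

section ConvexHull

variable {𝕂 : Type*} [RCLike 𝕂] {S : Set 𝕂}

theorem exists_re_mul_nonneg_of_zero_mem_convexHull (h : (0 : 𝕂) ∈ convexHull ℝ S) (μ : 𝕂) :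
    ∃ z ∈ S, 0 ≤ re (μ * z) := by
  let f : 𝕂 →ₗ[ℝ] ℝ := reLm.comp (LinearMap.mulLeft ℝ μ)
  obtain ⟨z, hz, hfz⟩ :=
    (f.convexOn convex_univ).exists_ge_of_mem_convexHull (Set.subset_univ S) h
  exact ⟨z, hz, by simpa [f] using hfz⟩

theorem exists_re_mul_ge_of_zero_notMem_convexHull (hS : S.Finite)
    (h : (0 : 𝕂) ∉ convexHull ℝ S) : ∃ μ : 𝕂, ∃ δ > 0, ∀ z ∈ S, δ ≤ re (μ * z) := by
  obtain ⟨f, δ, hf0, hf⟩ := RCLike.geometric_hahn_banach_point_closed (𝕜 := 𝕂)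
    (convex_convexHull ℝ S) (hS.isCompact_convexHull (𝕜 := ℝ)).isClosed h
  refine ⟨f 1, δ, by simpa using hf0, fun z hz => ?_⟩
  have hfz : f z = f 1 * z := by rw [mul_comm, ← smul_eq_mul, ← map_smul, smul_eq_mul, mul_one]
  exact hfz ▸ (hf z (subset_convexHull ℝ S hz)).le

end ConvexHull

theorem norm_le_norm_add_of_re_inner_nonneg {𝕜 E : Type*} [RCLike 𝕜] [SeminormedAddCommGroup E]
    [InnerProductSpace 𝕜 E] {a b : E} (h : 0 ≤ re (inner 𝕜 a b)) : ‖a‖ ≤ ‖a + b‖ := by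
  have hsq := norm_add_sq (𝕜 := 𝕜) a b
  nlinarith [norm_nonneg a, norm_nonneg (a + b), sq_nonneg ‖b‖]

theorem exists_lt_forall_le_of_tendsto_cofinite {ι : Type*} {f : ι → ℝ}
    (hf : Tendsto f cofinite (𝓝 0)) {R : ℝ} (hR : 0 < R) :
    ∃ c < R, ∀ i, f i < R → f i ≤ c := by
  set G := {i | R / 2 ≤ f i ∧ f i < R}
  have hG : G.Finite := (eventually_cofinite.mp (hf.eventually (gt_mem_nhds (half_pos hR)))).subset
    fun i hi => not_lt.mpr hi.1
  rcases G.eq_empty_or_nonempty with hempty | hne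
  · refine ⟨R / 2, half_lt_self hR, fun i hi => ?_⟩
    by_contra! hlt
    exact hempty.subset ⟨hlt.le, hi⟩
  · obtain ⟨i₀, hi₀, hmax⟩ := G.exists_max_image f hG hne
    refine ⟨f i₀, hi₀.2, fun i hi => ?_⟩
    by_cases hiG : R / 2 ≤ f i
    · exact hmax i ⟨hiG, hi⟩
    · linarith [hi₀.1]

theorem norm_sub_ofReal_smul_sq_le {𝕜 E : Type*} [RCLike 𝕜] [SeminormedAddCommGroup E]
    [InnerProductSpace 𝕜 E] {a b : E} {t δ K : ℝ} (ht : 0 ≤ t) (hδ : δ ≤ re (inner 𝕜 a b))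
    (hb : ‖b‖ ≤ K) (htK : t * K ^ 2 ≤ δ) : ‖a - (t : 𝕜) • b‖ ^ 2 ≤ ‖a‖ ^ 2 - t * δ := by
  rw [norm_sub_sq (𝕜 := 𝕜), inner_smul_right, re_ofReal_mul, norm_smul, norm_ofReal,
    abs_of_nonneg ht]
  have hb2 : ‖b‖ ^ 2 ≤ K ^ 2 := pow_le_pow_left₀ (norm_nonneg b) hb 2
  nlinarith [mul_le_mul_of_nonneg_left hδ ht, mul_le_mul_of_nonneg_left hb2 (sq_nonneg t)]

namespace lp

variable {ι 𝕂 : Type*} [RCLike 𝕂] {x y : lp (fun _ : ι => 𝕂) ∞}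

theorem norm_le_norm_add_smul_of_zero_mem_convexHull
    (h : (0 : 𝕂) ∈ convexHull ℝ {z | ∃ i, ‖x i‖ = ‖x‖ ∧ conj (x i) * y i = z}) (lam : 𝕂) :
    ‖x‖ ≤ ‖x + lam • y‖ := by
  obtain ⟨_, ⟨i, hi, rfl⟩, hre⟩ := exists_re_mul_nonneg_of_zero_mem_convexHull h lam
  have hinner : inner 𝕂 (x i) (lam * y i) = lam * (conj (x i) * y i) := by
    rw [inner_apply]; ring
  calc ‖x‖ = ‖x i‖ := hi.symm
    _ ≤ ‖x i + lam * y i‖ := norm_le_norm_add_of_re_inner_nonneg (hinner ▸ hre)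
    _ ≤ ‖x + lam • y‖ := norm_apply_le_norm top_ne_zero (x + lam • y) i

theorem exists_norm_add_smul_lt (hx : 0 < ‖x‖) {c : ℝ} (hc : c < ‖x‖)
    (hgap : ∀ i, ‖x i‖ < ‖x‖ → ‖x i‖ ≤ c) {μ : 𝕂} {δ : ℝ} (hδ : 0 < δ)
    (hpeak : ∀ i, ‖x i‖ = ‖x‖ → δ ≤ re (μ * (conj (x i) * y i))) :
    ∃ lam : 𝕂, ‖x + lam • y‖ < ‖x‖ := by
  set K := ‖μ‖ * ‖y‖
  have hsmall : ∀ᶠ t in 𝓝 (0 : ℝ), t * K ^ 2 < δ ∧ c + t * K < ‖x‖ :=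
    (((by fun_prop : Continuous fun t : ℝ => t * K ^ 2).tendsto' 0 0 (by simp)).eventually_lt_const
      hδ).and
    (((by fun_prop : Continuous fun t : ℝ => c + t * K).tendsto' 0 c (by simp)).eventually_lt_const
      hc)
  obtain ⟨t, ⟨htK, htc⟩, ht⟩ := ((hsmall.filter_mono nhdsWithin_le_nhds).and
    (self_mem_nhdsWithin : ∀ᶠ t in 𝓝[>] (0 : ℝ), 0 < t)).exists
  set b := max √(‖x‖ ^ 2 - t * δ) (c + t * K)
  have hb : b < ‖x‖ := max_lt ((Real.sqrt_lt' hx).mpr (by nlinarith)) htc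
  refine ⟨-(t : 𝕂) * μ, lt_of_le_of_lt ?_ hb⟩
  refine norm_le_of_forall_le ((Real.sqrt_nonneg _).trans (le_max_left _ _)) fun i => ?_
  have hentry : (x + (-(t : 𝕂) * μ) • y) i = x i - (t : 𝕂) • (μ * y i) := by
    simp only [coeFn_add, coeFn_smul, Pi.add_apply, Pi.smul_apply, smul_eq_mul]; ring
  have hμy : ‖μ * y i‖ ≤ K := by
    rw [norm_mul]
    exact mul_le_mul_of_nonneg_left (norm_apply_le_norm top_ne_zero y i) (norm_nonneg μ)
  rw [hentry]
  rcases (norm_apply_le_norm top_ne_zero x i).eq_or_lt with hi | hi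
  · have hinner : inner 𝕂 (x i) (μ * y i) = μ * (conj (x i) * y i) := by
      rw [inner_apply]; ring
    refine le_max_of_le_left (Real.le_sqrt_of_sq_le ?_)
    rw [← hi]
    exact norm_sub_ofReal_smul_sq_le ht.le (hinner ▸ hpeak i hi) hμy htK.le
  · refine le_max_of_le_right ((norm_sub_le _ _).trans (add_le_add (hgap i hi) ?_))
    rw [norm_smul, norm_ofReal, abs_of_pos ht]
    exact mul_le_mul_of_nonneg_left hμy ht.le

theorem forall_norm_le_norm_add_smul_iff_zero_mem_convexHull [Nonempty ι]
    (hx : Tendsto (fun i => ‖x i‖) cofinite (𝓝 0)) :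
    (∀ lam : 𝕂, ‖x‖ ≤ ‖x + lam • y‖) ↔
      (0 : 𝕂) ∈ convexHull ℝ {z | ∃ i, ‖x i‖ = ‖x‖ ∧ conj (x i) * y i = z} := by
  refine ⟨fun horth => ?_, norm_le_norm_add_smul_of_zero_mem_convexHull⟩
  by_contra h0
  rcases eq_or_ne x 0 with rfl | hx0
  · exact h0 (subset_convexHull ℝ _ ⟨Classical.arbitrary ι, by simp, by simp⟩)
  have hxpos : 0 < ‖x‖ := norm_pos_iff.mpr hx0
  obtain ⟨c, hc, hgap⟩ := exists_lt_forall_le_of_tendsto_cofinite hx hxpos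
  have hpeak : {i | ‖x i‖ = ‖x‖}.Finite :=
    (eventually_cofinite.mp (hx.eventually_lt_const hxpos)).subset fun i hi => hi.not_lt
  have hS : {z | ∃ i, ‖x i‖ = ‖x‖ ∧ conj (x i) * y i = z}.Finite :=
    (hpeak.image fun i => conj (x i) * y i).subset fun _ ⟨i, hi, hz⟩ => ⟨i, hi, hz⟩
  obtain ⟨μ, δ, hδ, hμ⟩ := exists_re_mul_ge_of_zero_notMem_convexHull hS h0
  obtain ⟨lam, hlam⟩ :=
    exists_norm_add_smul_lt hxpos hc hgap hδ fun i hi => hμ _ ⟨i, hi, rfl⟩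
  exact (horth lam).not_gt hlam

end lp

theorem czero_BJ_orthogonality {𝕂 : Type*} [RCLike 𝕂] (x y : czero 𝕂) :
    (∀ lam : 𝕂, ‖x‖ ≤ ‖x + lam • y‖) ↔
      (0 : 𝕂) ∈ convexHull ℝ
        {z : 𝕂 | ∃ n : ℕ, ‖(x : lp (fun _ : ℕ => 𝕂) ∞) n‖ = ‖x‖ ∧
          (starRingEnd 𝕂) ((x : lp (fun _ : ℕ => 𝕂) ∞) n) *
            (y : lp (fun _ : ℕ => 𝕂) ∞) n = z} := by
  have hx : Tendsto (fun n => (x : lp (fun _ : ℕ => 𝕂) ∞) n) atTop (𝓝 0) := x.2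
  exact lp.forall_norm_le_norm_add_smul_iff_zero_mem_convexHull
    (by simpa [Nat.cofinite_eq_atTop] using hx.norm)
end

section
/- Let 1 < p < ∞ and x = (x_n), y = (y_n) ∈ ℓ_p. Then x ⊥_B y if and only if Σ_n conj(sgn(x_n)) |x_n|^{p-1} y_n = 0. -/
open ENNReal

/-- The sign of a scalar: `z/|z|` for `z ≠ 0` and `0` for `z = 0`. -/
noncomputable def sgn {𝕂 : Type*} [RCLike 𝕂] (z : 𝕂) : 𝕂 :=
  if z = 0 then 0 else z / (‖z‖ : 𝕂)

/-!
Write `J` for the coordinatewise duality map `z ↦ conj (sgn z) * |z| ^ (p - 1)` and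
`⟨J x, z⟩ = ∑ J (x n) * z n`. Since `J a * a = |a| ^ p`, Young's inequality for the exponents
`p / (p - 1)` and `p` gives the tangent-line inequality `‖x‖ ^ p + p Re ⟨J x, z⟩ ≤ ‖x + z‖ ^ p`.
With `z = λ y` it shows at once that `⟨J x, y⟩ = 0` forces `x ⊥_B y`. Conversely, applied at
`x + t μ y` in the direction `-t μ y` together with `‖x‖ ≤ ‖x + t μ y‖`, it gives
`Re (μ ⟨J (x + t μ y), y⟩) ≥ 0` for `t > 0`; since `J` is continuous for `p > 1`, dominated
convergence lets `t → 0`, so `Re (μ ⟨J x, y⟩) ≥ 0` for every `μ`, and `μ = -conj ⟨J x, y⟩`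
gives `⟨J x, y⟩ = 0`.
-/

open RCLike Filter Topology

lemma Real.rpow_sub_one_mul_le_rpow {P u v s : ℝ} (hP : 1 ≤ P) (hu : 0 ≤ u) (hv : 0 ≤ v)
    (hus : u ≤ s) (hvs : v ≤ s) : u ^ (P - 1) * v ≤ s ^ P := by
  calc u ^ (P - 1) * v ≤ s ^ (P - 1) * s :=
        mul_le_mul (Real.rpow_le_rpow hu hus (by linarith)) hvs hv
          (Real.rpow_nonneg (hv.trans hvs) _)
    _ = s ^ P := by rw [← Real.rpow_add_one' (hv.trans hvs) (by linarith), sub_add_cancel]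

lemma Real.rpow_sub_one_mul_le_add {P u v : ℝ} (hP : 1 < P) (hu : 0 ≤ u) (hv : 0 ≤ v) :
    u ^ (P - 1) * v ≤ (P - 1) / P * u ^ P + v ^ P / P := by
  have hq := (Real.HolderConjugate.conjExponent hP).symm
  have young := Real.young_inequality_of_nonneg (Real.rpow_nonneg hu (P - 1)) hv hq
  rw [← Real.rpow_mul hu, Real.conjExponent, mul_div_cancel₀ _ (by linarith),
    div_div_eq_mul_div, mul_div_assoc] at young
  linarith [mul_comm v (u ^ (P - 1)), mul_comm (u ^ P) ((P - 1) / P)]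

section Scalar

variable {𝕂 : Type*} [RCLike 𝕂]

lemma norm_sgn_le_one (z : 𝕂) : ‖sgn z‖ ≤ 1 := by
  unfold sgn
  split_ifs with hz
  · simp
  · simp [norm_div, hz]

lemma conj_sgn_mul_self (z : 𝕂) : starRingEnd 𝕂 (sgn z) * z = ‖z‖ := by
  unfold sgn
  split_ifs with hz
  · simp [hz]
  · rw [map_div₀, conj_ofReal, div_mul_eq_mul_div, RCLike.conj_mul, pow_two,
      mul_div_cancel_right₀ _ (by simpa using hz)]

lemma continuousAt_sgn {z : 𝕂} (hz : z ≠ 0) : ContinuousAt sgn z := by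
  have hsgn : (fun w : 𝕂 => w / (‖w‖ : 𝕂)) =ᶠ[𝓝 z] sgn := by
    filter_upwards [isOpen_ne.mem_nhds hz] with w hw
    simp [sgn, hw]
  refine ContinuousAt.congr ?_ hsgn
  exact continuousAt_id.div (RCLike.continuous_ofReal.comp continuous_norm).continuousAt
    (by simpa)

/-- The coordinate of the duality map of `ℓ_P`: `re (∑ n, duality P (x n) * y n)` is the
derivative of `‖·‖_P ^ P / P` at `x` in the direction `y`. -/
noncomputable def duality (P : ℝ) (z : 𝕂) : 𝕂 :=
  starRingEnd 𝕂 (sgn z) * ((‖z‖ ^ (P - 1) : ℝ) : 𝕂)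

lemma norm_duality_le (P : ℝ) (z : 𝕂) : ‖duality P z‖ ≤ ‖z‖ ^ (P - 1) := by
  rw [duality, norm_mul, RCLike.norm_conj, norm_ofReal,
    abs_of_nonneg (Real.rpow_nonneg (norm_nonneg z) _)]
  exact mul_le_of_le_one_left (Real.rpow_nonneg (norm_nonneg z) _) (norm_sgn_le_one z)

lemma duality_mul_self {P : ℝ} (hP : 0 < P) (z : 𝕂) : duality P z * z = ((‖z‖ ^ P : ℝ) : 𝕂) := by
  rw [duality, mul_right_comm, conj_sgn_mul_self, ← RCLike.ofReal_mul,
    ← Real.rpow_one_add' (norm_nonneg z) (by linarith), add_sub_cancel]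

lemma norm_duality_mul_le_rpow {P s : ℝ} (hP : 1 ≤ P) {a c : 𝕂} (ha : ‖a‖ ≤ s) (hc : ‖c‖ ≤ s) :
    ‖duality P a * c‖ ≤ s ^ P := by
  rw [norm_mul]
  exact (mul_le_mul_of_nonneg_right (norm_duality_le P a) (norm_nonneg c)).trans
    (Real.rpow_sub_one_mul_le_rpow hP (norm_nonneg a) (norm_nonneg c) ha hc)

lemma continuous_duality {P : ℝ} (hP : 1 < P) : Continuous (duality P : 𝕂 → 𝕂) := by
  have hpow : Continuous fun z : 𝕂 => ((‖z‖ ^ (P - 1) : ℝ) : 𝕂) :=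
    RCLike.continuous_ofReal.comp (continuous_norm.rpow_const fun _ => Or.inr (by linarith))
  refine continuous_iff_continuousAt.2 fun z => ?_
  rcases eq_or_ne z 0 with rfl | hz
  · -- at `0` the factor `sgn` jumps, but `‖duality P z‖ ≤ ‖z‖ ^ (P - 1) → 0`
    have h0 : duality P (0 : 𝕂) = 0 := by simp [duality, sgn]
    rw [ContinuousAt, h0]
    refine squeeze_zero_norm (norm_duality_le P) ?_
    simpa [Real.zero_rpow (by linarith : P - 1 ≠ 0)] using
      ((continuous_norm.rpow_const fun _ => Or.inr (by linarith)).tendsto (0 : 𝕂) :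
        Tendsto (fun z : 𝕂 => ‖z‖ ^ (P - 1)) _ _)
  · exact (continuous_conj.continuousAt.comp (continuousAt_sgn hz)).mul hpow.continuousAt

lemma norm_rpow_add_re_duality_mul_le {P : ℝ} (hP : 1 < P) (a c : 𝕂) :
    ‖a‖ ^ P + P * re (duality P a * c) ≤ ‖a + c‖ ^ P := by
  have hP0 : 0 < P := by linarith
  have hsplit : re (duality P a * c) = re (duality P a * (a + c)) - ‖a‖ ^ P := by
    rw [mul_add, duality_mul_self hP0, map_add, ofReal_re]
    ring
  have hre : re (duality P a * (a + c)) ≤ ‖a‖ ^ (P - 1) * ‖a + c‖ :=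
    (re_le_norm _).trans (by
      rw [norm_mul]
      exact mul_le_mul_of_nonneg_right (norm_duality_le P a) (norm_nonneg _))
  have young := Real.rpow_sub_one_mul_le_add hP (norm_nonneg a) (norm_nonneg (a + c))
  calc ‖a‖ ^ P + P * re (duality P a * c)
      = P * re (duality P a * (a + c)) - (P - 1) * ‖a‖ ^ P := by rw [hsplit]; ring
    _ ≤ P * ((P - 1) / P * ‖a‖ ^ P + ‖a + c‖ ^ P / P) - (P - 1) * ‖a‖ ^ P := by
      gcongr
      exact hre.trans young
    _ = ‖a + c‖ ^ P := by field_simp; ring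

lemma eq_zero_of_forall_re_mul_nonneg {s : 𝕂} (h : ∀ μ : 𝕂, 0 ≤ re (μ * s)) : s = 0 := by
  have := h (-starRingEnd 𝕂 s)
  rw [neg_mul, RCLike.conj_mul, map_neg, ← RCLike.ofReal_pow, ofReal_re, neg_nonneg] at this
  exact norm_eq_zero.1 (pow_eq_zero_iff two_ne_zero |>.1 (le_antisymm this (sq_nonneg _)))

end Scalar

section lp

variable {𝕂 : Type*} [RCLike 𝕂] {p : ℝ≥0∞}

noncomputable def dualPairing (x y : lp (fun _ : ℕ => 𝕂) p) : 𝕂 :=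
  ∑' n, duality p.toReal (x n) * y n

lemma lp.add_smul_apply (x y : lp (fun _ : ℕ => 𝕂) p) (c : 𝕂) (n : ℕ) :
    (x + c • y) n = x n + c * y n := by
  rw [lp.coeFn_add, lp.coeFn_smul]
  rfl

lemma summable_norm_add_norm_rpow (hp : 0 < p.toReal) (x y : lp (fun _ : ℕ => 𝕂) p) :
    Summable fun n => (‖x n‖ + ‖y n‖) ^ p.toReal := by
  refine ((lp.memℓp x).norm.add (lp.memℓp y).norm).summable hp |>.congr fun n => ?_
  simp only [Pi.add_apply, Real.norm_eq_abs]
  rw [abs_of_nonneg (by positivity)]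

lemma summable_duality_mul (hp : 1 ≤ p.toReal) (x y : lp (fun _ : ℕ => 𝕂) p) :
    Summable fun n => duality p.toReal (x n) * y n :=
  .of_norm_bounded (summable_norm_add_norm_rpow (by linarith) x y) fun n =>
    norm_duality_mul_le_rpow hp (le_add_of_nonneg_right (norm_nonneg _))
      (le_add_of_nonneg_left (norm_nonneg _))

lemma dualPairing_smul_right (x y : lp (fun _ : ℕ => 𝕂) p) (c : 𝕂) :
    dualPairing x (c • y) = c * dualPairing x y := by
  rw [dualPairing, dualPairing, ← tsum_mul_left]
  congr 1 with n
  rw [lp.coeFn_smul, Pi.smul_apply, smul_eq_mul]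
  ring

lemma norm_rpow_add_re_dualPairing_le (hp : 1 < p.toReal) (x z : lp (fun _ : ℕ => 𝕂) p) :
    ‖x‖ ^ p.toReal + p.toReal * re (dualPairing x z) ≤ ‖x + z‖ ^ p.toReal := by
  have hp0 : 0 < p.toReal := by linarith
  have hre : Summable fun n => p.toReal * re (duality p.toReal (x n) * z n) :=
    ((RCLike.hasSum_re 𝕂 (summable_duality_mul hp.le x z).hasSum).summable).mul_left _
  have hlhs : ‖x‖ ^ p.toReal + p.toReal * re (dualPairing x z)
      = ∑' n, (‖x n‖ ^ p.toReal + p.toReal * re (duality p.toReal (x n) * z n)) := by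
    rw [Summable.tsum_add ((lp.memℓp x).summable hp0) hre, tsum_mul_left,
      ← RCLike.re_tsum 𝕂 (summable_duality_mul hp.le x z), lp.norm_rpow_eq_tsum hp0, dualPairing]
  rw [hlhs, lp.norm_rpow_eq_tsum hp0]
  exact Summable.tsum_le_tsum (fun n => norm_rpow_add_re_duality_mul_le hp (x n) (z n))
    (((lp.memℓp x).summable hp0).add hre) ((lp.memℓp (x + z)).summable hp0)

lemma tendsto_dualPairing_add_smul (hp : 1 < p.toReal) (x y : lp (fun _ : ℕ => 𝕂) p) :
    Tendsto (fun c : 𝕂 => dualPairing (x + c • y) y) (𝓝 0) (𝓝 (dualPairing x y)) := by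
  refine tendsto_tsum_of_dominated_convergence (summable_norm_add_norm_rpow (by linarith) x y)
    (fun n => ?_) ?_
  · have hc : Tendsto (fun c : 𝕂 => x n + c * y n) (𝓝 0) (𝓝 (x n)) := by
      simpa using ((continuous_mul_const (y n)).tendsto 0).const_add (x n)
    simpa only [lp.add_smul_apply, Function.comp_apply] using
      ((continuous_duality hp).tendsto (x n) |>.comp hc).mul_const (y n)
  · filter_upwards [Metric.closedBall_mem_nhds (0 : 𝕂) one_pos] with c hc n
    rw [mem_closedBall_zero_iff] at hc
    refine norm_duality_mul_le_rpow hp.le ?_ (le_add_of_nonneg_left (norm_nonneg _))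
    calc ‖(x + c • y) n‖ ≤ ‖x n‖ + ‖c‖ * ‖y n‖ := by
          simpa only [lp.add_smul_apply, norm_mul] using norm_add_le (x n) (c * y n)
      _ ≤ ‖x n‖ + ‖y n‖ := by gcongr; exact mul_le_of_le_one_left (norm_nonneg _) hc

lemma re_mul_dualPairing_nonneg (hp : 1 < p.toReal) {x y : lp (fun _ : ℕ => 𝕂) p}
    (h : ∀ lam : 𝕂, ‖x‖ ≤ ‖x + lam • y‖) (μ : 𝕂) : 0 ≤ re (μ * dualPairing x y) := by
  have hlim : Tendsto (fun t : ℝ => re (μ * dualPairing (x + ((t : 𝕂) * μ) • y) y))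
      (𝓝[>] 0) (𝓝 (re (μ * dualPairing x y))) := by
    have ht : Tendsto (fun t : ℝ => (t : 𝕂) * μ) (𝓝[>] 0) (𝓝 0) := by
      simpa using ((RCLike.continuous_ofReal.tendsto 0).mul_const μ).mono_left nhdsWithin_le_nhds
    exact (continuous_re.tendsto _).comp
      (((tendsto_dualPairing_add_smul hp x y).comp ht).const_mul μ)
  refine ge_of_tendsto hlim ?_
  filter_upwards [self_mem_nhdsWithin] with t (ht : 0 < t)
  set x' := x + ((t : 𝕂) * μ) • y
  have htangent := norm_rpow_add_re_dualPairing_le hp x' ((-((t : 𝕂) * μ)) • y)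
  rw [show x' + (-((t : 𝕂) * μ)) • y = x by simp [x'], dualPairing_smul_right,
    show -((t : 𝕂) * μ) * dualPairing x' y = -(t * (μ * dualPairing x' y)) by ring,
    map_neg, re_ofReal_mul] at htangent
  have hnorm : ‖x‖ ^ p.toReal ≤ ‖x'‖ ^ p.toReal :=
    Real.rpow_le_rpow (lp.norm_nonneg' x) (h ((t : 𝕂) * μ)) (by linarith)
  have hprod : 0 ≤ (p.toReal * t) * re (μ * dualPairing x' y) := by linarith
  exact (mul_nonneg_iff_of_pos_left (by positivity)).1 hprod

end lp

theorem ellp_BJ_orthogonality {𝕂 : Type*} [RCLike 𝕂]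
    (p : ℝ≥0∞) (hp : 1 < p) (hp' : p ≠ ∞)
    (x y : lp (fun _ : ℕ => 𝕂) p) :
    (∀ lam : 𝕂, ‖x‖ ≤ ‖x + lam • y‖) ↔
      ∑' n : ℕ, (starRingEnd 𝕂) (sgn (x n)) *
        ((‖x n‖ ^ (p.toReal - 1) : ℝ) : 𝕂) * y n = 0 := by
  have hP : 1 < p.toReal := by
    simpa using (ENNReal.toReal_lt_toReal ENNReal.one_ne_top hp').2 hp
  change _ ↔ dualPairing x y = 0
  refine ⟨fun h => eq_zero_of_forall_re_mul_nonneg (re_mul_dualPairing_nonneg hP h),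
    fun h lam => ?_⟩
  have htangent := norm_rpow_add_re_dualPairing_le hP x (lam • y)
  rw [dualPairing_smul_right, h, mul_zero, map_zero, mul_zero, add_zero] at htangent
  exact (Real.rpow_le_rpow_iff (lp.norm_nonneg' _) (lp.norm_nonneg' _) (by linarith)).1 htangent
end
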